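/- arXiv:2105.00766 — 11 statements merged into one kernel-verified Lean document; each statement's English description precedes it below -/
import Mathlib

section
/- In the classical power-of-two-choices mean field model with arrival rate λx_c and service rate μ where x_cλ < μ, the stationary point of the ODE system ṡ_i = x_cλ(s_{i-1}² − s_i²) − μ(s_i − s_{i+1}) with s_0 = 1 is given by s_i* = (x_cλ/μ)^(2^i − 1) for all i ≥ 0. -/
open Filter

/-- Classical power-of-two-choices: the stationary point of
`ṡ_i = x_cλ (s_{i-1}² - s_i²) - μ (s_i - s_{i+1})`, `s_0 = 1`, `s_i → 0`,
is `s_i* = (x_cλ/μ)^(2^i - 1)`. -/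
theorem po2_stationary_point (xcl mu : ℝ) (hx : 0 < xcl) (hxmu : xcl < mu)
    (s : ℕ → ℝ) (hs0 : s 0 = 1)
    (hmono : ∀ i, s (i+1) ≤ s i) (hnn : ∀ i, 0 ≤ s i) (hle1 : ∀ i, s i ≤ 1)
    (hlim : Tendsto s atTop (nhds 0))
    (hstat : ∀ i : ℕ, xcl * ((s i)^2 - (s (i+1))^2) - mu * (s (i+1) - s (i+2)) = 0) :
    ∀ i : ℕ, s i = (xcl / mu) ^ (2 ^ i - 1) := by
  have hmu : 0 < mu := hx.trans hxmu
  set f : ℕ → ℝ := fun i => xcl * (s i)^2 - mu * s (i+1) with hf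
  have hstep : ∀ i, f (i+1) = f i := by
    intro i
    have h := hstat i
    simp only [hf]
    ring_nf
    ring_nf at h
    linarith
  have hconst : ∀ i, f i = f 0 := by
    intro i
    induction i with
    | zero => rfl
    | succ n ih => exact (hstep n).trans ih
  have hlim1 : Tendsto (fun i => s (i+1)) atTop (nhds 0) :=
    hlim.comp (tendsto_add_atTop_nat 1)
  have hflim : Tendsto f atTop (nhds 0) := by
    have : Tendsto f atTop (nhds (xcl * 0^2 - mu * 0)) := by
      exact ((hlim.pow 2).const_mul xcl).sub (hlim1.const_mul mu)
    simpa using this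
  have hf0 : f 0 = 0 := by
    have h : Tendsto f atTop (nhds (f 0)) :=
      Tendsto.congr (fun i => (hconst i).symm) tendsto_const_nhds
    exact tendsto_nhds_unique h hflim
  have hrec : ∀ i, s (i+1) = (xcl / mu) * (s i)^2 := by
    intro i
    have h := (hconst i).trans hf0
    simp only [hf] at h
    field_simp
    linarith
  intro i
  induction i with
  | zero => simpa using hs0
  | succ n ih =>
    have h2 : 2 ^ (n+1) - 1 = 2 * (2^n - 1) + 1 := by
      have : 1 ≤ 2^n := Nat.one_le_two_pow
      omega
    rw [hrec n, ih, h2, pow_add, pow_one, mul_comm 2, pow_mul]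
    ring
end

section
/- With G_{k,i}(s) defined as the unique solution of x_cλ·G·z_{k,i}(s) + μ·G = x_cλ·s_{k,i-1}·z_{k,i}(s) + μ·s_{k,i+1}, the map G preserves the state space: if s satisfies s_{k,0} = 1 and 1 ≥ s_{k,i} ≥ s_{k,i+1} ≥ 0 for all k, i, then G_{k,i}(s) ≥ G_{k,i+1}(s) for all k ∈ K and i ≥ 1. -/
/-!
Solving its defining linear equation writes `G_{k,i}(s)` as the weighted average of
`s_{k,i-1}` and `s_{k,i+1}` with weights `x_cλ z_{k,i}(s)` and `μ`. Passing from `i` to `i + 1`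
lowers both averaged values, since `s` is decreasing in `i`, and lowers the weight `z_{k,i}(s)` of
the larger value `s_{k,i-1}`; each of the two changes can only decrease the average.
-/

open Finset Filter

/-- `zfun K p kbar s k i` is the quantity `z_{k,i+1}(s)` of the graph mean field model:
`(1/2) * Σ_{k'∈K} ((k'+k)/k̄) p(k') (s_{k',i} + s_{k',i+1})`. -/
noncomputable def zfun (K : Finset ℕ) (p : ℕ → ℝ) (kbar : ℝ) (s : ℕ → ℕ → ℝ) (k i : ℕ) : ℝ :=
  (1/2) * ∑ k' ∈ K, (((k' : ℝ) + (k : ℝ)) / kbar) * p k' * (s k' i + s k' (i+1))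

theorem eq_div_of_mul_add_mul_eq {a z μ g x y : ℝ} (hne : a * z + μ ≠ 0)
    (h : a * g * z + μ * g = a * x * z + μ * y) :
    g = (a * z * x + μ * y) / (a * z + μ) := by
  rw [eq_div_iff hne]
  linarith

theorem weighted_avg_le_weighted_avg {c c' μ x x' y y' : ℝ} (hμ : 0 < μ) (hc' : 0 ≤ c')
    (hcc' : c' ≤ c) (hx : x' ≤ x) (hy : y' ≤ y) (hyx : y ≤ x) :
    (c' * x' + μ * y') / (c' + μ) ≤ (c * x + μ * y) / (c + μ) := by
  have hc'μ : 0 < c' + μ := by linarith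
  calc (c' * x' + μ * y') / (c' + μ) ≤ (c' * x + μ * y) / (c' + μ) := by gcongr
    _ ≤ (c * x + μ * y) / (c + μ) := by
      rw [div_le_div_iff₀ hc'μ (by linarith)]
      nlinarith [mul_nonneg (mul_nonneg hμ.le (sub_nonneg.2 hcc')) (sub_nonneg.2 hyx)]

section zfun

variable {K : Finset ℕ} {p : ℕ → ℝ} {kbar : ℝ} {s : ℕ → ℕ → ℝ}

theorem zfun_nonneg (hp : ∀ k ∈ K, 0 ≤ p k) (hkbar : 0 ≤ kbar)
    (hs : ∀ k ∈ K, ∀ i, 0 ≤ s k i) (k i : ℕ) : 0 ≤ zfun K p kbar s k i := by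
  unfold zfun
  refine mul_nonneg (by norm_num) (sum_nonneg fun k' hk' => ?_)
  have hcoeff : 0 ≤ ((k' : ℝ) + k) / kbar := by positivity
  exact mul_nonneg (mul_nonneg hcoeff (hp k' hk')) (add_nonneg (hs k' hk' _) (hs k' hk' _))

theorem zfun_antitone (hp : ∀ k ∈ K, 0 ≤ p k) (hkbar : 0 ≤ kbar)
    (hs : ∀ k ∈ K, Antitone (s k)) (k : ℕ) : Antitone (zfun K p kbar s k) := by
  intro i j hij
  unfold zfun
  gcongr with k' hk'
  · exact mul_nonneg (by positivity) (hp k' hk')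
  · exact hs k' hk' hij
  · exact hs k' hk' (by omega)

end zfun

theorem G_preserves_state_space_general (K : Finset ℕ) (p : ℕ → ℝ)
    (hp : ∀ k ∈ K, 0 ≤ p k)
    (kbar : ℝ) (hkpos : 0 < kbar)
    (xcl mu : ℝ) (hx : 0 < xcl) (hmu : 0 < mu)
    (s : ℕ → ℕ → ℝ)
    (hmono : ∀ k i, s k (i+1) ≤ s k i) (hnn : ∀ k i, 0 ≤ s k i)
    (G : ℕ → ℕ → ℝ)
    (hG : ∀ k ∈ K, ∀ i : ℕ,
      xcl * G k i * zfun K p kbar s k i + mu * G k i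
        = xcl * s k i * zfun K p kbar s k i + mu * s k (i+2)) :
    ∀ k ∈ K, ∀ i : ℕ, G k (i+1) ≤ G k i := by
  intro k hk i
  have hs : ∀ k, Antitone (s k) := fun k => antitone_nat_of_succ_le (hmono k)
  have hz_nonneg (j : ℕ) : 0 ≤ xcl * zfun K p kbar s k j :=
    mul_nonneg hx.le (zfun_nonneg hp hkpos.le (fun k _ => hnn k) k j)
  have hz_succ : xcl * zfun K p kbar s k (i+1) ≤ xcl * zfun K p kbar s k i :=
    mul_le_mul_of_nonneg_left (zfun_antitone hp hkpos.le (fun k _ => hs k) k i.le_succ) hx.le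
  rw [eq_div_of_mul_add_mul_eq (add_pos_of_nonneg_of_pos (hz_nonneg i) hmu).ne' (hG k hk i),
    eq_div_of_mul_add_mul_eq (add_pos_of_nonneg_of_pos (hz_nonneg (i+1)) hmu).ne' (hG k hk (i+1))]
  exact weighted_avg_le_weighted_avg hmu (hz_nonneg (i+1)) hz_succ (hmono k i) (hmono k (i+2))
    (hs k (by omega))

/-- The fixed-point map `G` preserves monotonicity in `i`:
`G_{k,i}(s) ≥ G_{k,i+1}(s)` (stated at level `i+1`, i.e. for all `i ≥ 1`). -/
theorem G_preserves_state_space (K : Finset ℕ) (p : ℕ → ℝ)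
    (hp : ∀ k ∈ K, 0 ≤ p k) (hpsum : ∑ k ∈ K, p k = 1)
    (kbar : ℝ) (hkbar : kbar = ∑ k ∈ K, p k * (k : ℝ)) (hkpos : 0 < kbar)
    (xcl mu : ℝ) (hx : 0 < xcl) (hmu : 0 < mu)
    (s : ℕ → ℕ → ℝ) (hs0 : ∀ k, s k 0 = 1)
    (hmono : ∀ k i, s k (i+1) ≤ s k i) (hnn : ∀ k i, 0 ≤ s k i) (hle1 : ∀ k i, s k i ≤ 1)
    (G : ℕ → ℕ → ℝ)
    (hG : ∀ k ∈ K, ∀ i : ℕ,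
      xcl * G k i * zfun K p kbar s k i + mu * G k i
        = xcl * s k i * zfun K p kbar s k i + mu * s k (i+2)) :
    ∀ k ∈ K, ∀ i : ℕ, G k (i+1) ≤ G k i :=
  G_preserves_state_space_general K p hp kbar hkpos xcl mu hx hmu s hmono hnn G hG
end

section
/- The drift function F of the graph mean field model is Lipschitz in the sup norm: for all states s, ŝ, ‖F(s) − F(ŝ)‖_∞ ≤ C·‖s − ŝ‖_∞ with C = 3x_cλ(1 + k_max/k̄) + 2μ. -/
open Finset Filter

/-!
Every term of the drift is a product or a difference of coordinates of the state, all of which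
lie in `[0, 1]`. The rate `z_{k,i}` is an average of coordinates against the weights
`(k' + k) p(k') / k̄`, whose total mass is `1 + k / k̄ ≤ 1 + k_max / k̄`; hence `z` is bounded by
that mass and is Lipschitz with the same constant. Writing
`a z - b z' = a (z - z') + (a - b) z'` with `|a| ≤ 1`, `|a - b| ≤ 2d` gives `3 (1 + k_max / k̄) d`
for the infection term, and the recovery term contributes `2 μ d`.
-/

lemma abs_sub_sub_sub_le {a b c e d : ℝ} (hac : |a - c| ≤ d) (hbe : |b - e| ≤ d) :
    |(a - b) - (c - e)| ≤ 2 * d := by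
  rw [show (a - b) - (c - e) = (a - c) - (b - e) by ring]
  linarith [abs_sub (a - c) (b - e)]

lemma abs_mul_sub_mul_le (a b x y : ℝ) :
    |a * x - b * y| ≤ |a| * |x - y| + |a - b| * |y| := by
  rw [show a * x - b * y = a * (x - y) + (a - b) * y by ring, ← abs_mul, ← abs_mul]
  exact abs_add_le _ _

lemma abs_sum_mul_le {ι : Type*} {s : Finset ι} {w f : ι → ℝ} {M e : ℝ}
    (hw : ∀ i ∈ s, 0 ≤ w i) (hwM : ∑ i ∈ s, w i ≤ M) (hf : ∀ i ∈ s, |f i| ≤ e) (he : 0 ≤ e) :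
    |∑ i ∈ s, w i * f i| ≤ M * e :=
  calc |∑ i ∈ s, w i * f i| ≤ ∑ i ∈ s, w i * e := by
        refine (abs_sum_le_sum_abs _ _).trans (sum_le_sum fun i hi => ?_)
        rw [abs_mul, abs_of_nonneg (hw i hi)]
        exact mul_le_mul_of_nonneg_left (hf i hi) (hw i hi)
    _ = (∑ i ∈ s, w i) * e := (sum_mul _ _ _).symm
    _ ≤ M * e := mul_le_mul_of_nonneg_right hwM he

section Zfun

variable {K : Finset ℕ} {p : ℕ → ℝ} {kbar : ℝ}

lemma sum_degree_weight_eq (hpsum : ∑ k ∈ K, p k = 1) (hkbar : kbar = ∑ k ∈ K, p k * (k : ℝ))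
    (hkpos : kbar ≠ 0) (k : ℕ) :
    ∑ k' ∈ K, ((k' : ℝ) + k) / kbar * p k' = 1 + k / kbar := by
  have hsplit : ∑ k' ∈ K, ((k' : ℝ) + k) / kbar * p k'
      = ((∑ k' ∈ K, p k' * (k' : ℝ)) + k * ∑ k' ∈ K, p k') / kbar := by
    rw [mul_sum, ← sum_add_distrib, sum_div]
    exact sum_congr rfl fun k' _ => by ring
  rw [hsplit, ← hkbar, hpsum, mul_one, add_div, div_self hkpos]

lemma sum_degree_weight_le {kmax : ℕ} (hpsum : ∑ k ∈ K, p k = 1)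
    (hkbar : kbar = ∑ k ∈ K, p k * (k : ℝ)) (hkpos : 0 < kbar) {k : ℕ} (hk : k ≤ kmax) :
    ∑ k' ∈ K, ((k' : ℝ) + k) / kbar * p k' ≤ 1 + kmax / kbar := by
  rw [sum_degree_weight_eq hpsum hkbar hkpos.ne']
  gcongr

lemma zfun_sub (s t : ℕ → ℕ → ℝ) (k i : ℕ) :
    zfun K p kbar s k i - zfun K p kbar t k i = zfun K p kbar (s - t) k i := by
  simp only [zfun, ← mul_sub, ← sum_sub_distrib, Pi.sub_apply]
  congr 1
  exact sum_congr rfl fun k' _ => by ring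

lemma abs_zfun_le (hp : ∀ k ∈ K, 0 ≤ p k) (hkpos : 0 < kbar) {M e : ℝ} {k : ℕ}
    (hM : ∑ k' ∈ K, ((k' : ℝ) + k) / kbar * p k' ≤ M) {u : ℕ → ℕ → ℝ}
    (hu : ∀ k' j, |u k' j| ≤ e) (i : ℕ) :
    |zfun K p kbar u k i| ≤ M * e := by
  have he : 0 ≤ e := (abs_nonneg _).trans (hu 0 0)
  have hw : ∀ k' ∈ K, 0 ≤ ((k' : ℝ) + k) / kbar * p k' := fun k' hk' => by
    have := hp k' hk'
    positivity
  have hsum := abs_sum_mul_le hw hM (fun k' _ => (abs_add_le _ _).trans (add_le_add (hu k' i)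
    (hu k' (i + 1)))) (by linarith)
  rw [zfun, abs_mul, abs_of_pos one_half_pos]
  linarith

end Zfun

theorem drift_lipschitz_general (K : Finset ℕ) (p : ℕ → ℝ)
    (hp : ∀ k ∈ K, 0 ≤ p k) (hpsum : ∑ k ∈ K, p k = 1)
    (kbar : ℝ) (hkbar : kbar = ∑ k ∈ K, p k * (k : ℝ)) (hkpos : 0 < kbar)
    (kmax : ℕ) (hkmax : ∀ k ∈ K, k ≤ kmax)
    (xcl mu : ℝ) (hx : 0 < xcl) (hmu : 0 < mu)
    (s t : ℕ → ℕ → ℝ)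
    (hsmono : ∀ k i, s k (i+1) ≤ s k i)
    (hsnn : ∀ k i, 0 ≤ s k i) (hsle1 : ∀ k i, s k i ≤ 1)
    (htnn : ∀ k i, 0 ≤ t k i) (htle1 : ∀ k i, t k i ≤ 1)
    (d : ℝ) (hdist : ∀ k i, |s k i - t k i| ≤ d) :
    ∀ k ∈ K, ∀ i : ℕ,
      |(xcl * (s k i - s k (i+1)) * zfun K p kbar s k i - mu * (s k (i+1) - s k (i+2)))
        - (xcl * (t k i - t k (i+1)) * zfun K p kbar t k i - mu * (t k (i+1) - t k (i+2)))|
      ≤ (3 * xcl * (1 + (kmax : ℝ) / kbar) + 2 * mu) * d := by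
  intro k hk i
  set M : ℝ := 1 + (kmax : ℝ) / kbar
  have hd : 0 ≤ d := (abs_nonneg _).trans (hdist 0 0)
  have hw := sum_degree_weight_le hpsum hkbar hkpos (hkmax k hk)
  have hzt : |zfun K p kbar t k i| ≤ M * 1 :=
    abs_zfun_le hp hkpos hw (fun k' j => abs_le.2 ⟨by linarith [htnn k' j], htle1 k' j⟩) i
  have hz : |zfun K p kbar s k i - zfun K p kbar t k i| ≤ M * d := by
    rw [zfun_sub]
    exact abs_zfun_le hp hkpos hw hdist i
  have hrate : |s k i - s k (i+1)| ≤ 1 :=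
    abs_le.2 ⟨by linarith [hsmono k i], by linarith [hsnn k (i+1), hsle1 k i]⟩
  have hinf := abs_mul_sub_mul_le (s k i - s k (i+1)) (t k i - t k (i+1))
    (zfun K p kbar s k i) (zfun K p kbar t k i)
  have hrate_sub := abs_sub_sub_sub_le (hdist k i) (hdist k (i+1))
  have hrec := abs_sub_sub_sub_le (hdist k (i+1)) (hdist k (i+2))
  calc _ = |xcl * ((s k i - s k (i+1)) * zfun K p kbar s k i
          - (t k i - t k (i+1)) * zfun K p kbar t k i)
          - mu * ((s k (i+1) - s k (i+2)) - (t k (i+1) - t k (i+2)))| := by ring_nf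
    _ ≤ xcl * (1 * (M * d) + 2 * d * (M * 1)) + mu * (2 * d) := by
        refine (abs_sub _ _).trans ?_
        rw [abs_mul, abs_mul, abs_of_pos hx, abs_of_pos hmu]
        gcongr
        refine hinf.trans ?_
        gcongr
    _ = (3 * xcl * M + 2 * mu) * d := by ring

/-- The drift function of the graph mean field model is Lipschitz in the sup norm with
constant `C = 3 x_cλ (1 + k_max/k̄) + 2μ` (drift stated at level `i+1`, i.e. for all `i ≥ 1`;
the level-0 drift is identically zero). -/
theorem drift_lipschitz (K : Finset ℕ) (p : ℕ → ℝ)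
    (hp : ∀ k ∈ K, 0 ≤ p k) (hpsum : ∑ k ∈ K, p k = 1)
    (kbar : ℝ) (hkbar : kbar = ∑ k ∈ K, p k * (k : ℝ)) (hkpos : 0 < kbar)
    (kmax : ℕ) (hkmaxmem : kmax ∈ K) (hkmax : ∀ k ∈ K, k ≤ kmax)
    (xcl mu : ℝ) (hx : 0 < xcl) (hmu : 0 < mu)
    (s t : ℕ → ℕ → ℝ)
    (hs0 : ∀ k, s k 0 = 1) (hsmono : ∀ k i, s k (i+1) ≤ s k i)
    (hsnn : ∀ k i, 0 ≤ s k i) (hsle1 : ∀ k i, s k i ≤ 1)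
    (ht0 : ∀ k, t k 0 = 1) (htmono : ∀ k i, t k (i+1) ≤ t k i)
    (htnn : ∀ k i, 0 ≤ t k i) (htle1 : ∀ k i, t k i ≤ 1)
    (d : ℝ) (hd : 0 ≤ d) (hdist : ∀ k i, |s k i - t k i| ≤ d) :
    ∀ k ∈ K, ∀ i : ℕ,
      |(xcl * (s k i - s k (i+1)) * zfun K p kbar s k i - mu * (s k (i+1) - s k (i+2)))
        - (xcl * (t k i - t k (i+1)) * zfun K p kbar t k i - mu * (t k (i+1) - t k (i+2)))|
      ≤ (3 * xcl * (1 + (kmax : ℝ) / kbar) + 2 * mu) * d :=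
  drift_lipschitz_general K p hp hpsum kbar hkbar hkpos kmax hkmax xcl mu hx hmu s t hsmono hsnn
    hsle1 htnn htle1 d hdist
end

section
/- Define s_i = Σ_k p(k)·s_{k,i} and s_{(k),i} = Σ_k p(k)·k·s_{k,i}. If each s_{k,i} evolves according to the graph mean field ODE ṡ_{k,i} = x_cλ(s_{k,i-1} − s_{k,i})·z_{k,i}(s) − μ(s_{k,i} − s_{k,i+1}), then the aggregate s_i satisfies ṡ_i = (x_cλ/k̄)·(s_{i-1}·s_{(k),i-1} − s_i·s_{(k),i}) − μ·(s_i − s_{i+1}). -/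
/-!
Multiplying the individual equations by `p k` and summing, the recovery term
`μ (s_{k,i} - s_{k,i+1})` passes to the aggregate by linearity. In the infection term, `z_{k,i}` is affine in
`k`: `2 k̄ z_{k,i} = W + k V`, with `V`, `W` the plain and `k`-weighted averages of
`a + b`, where `a = s_{·,i-1}`, `b = s_{·,i}`. So the double sum becomes
`(Σ p (a - b)) W + (Σ p k (a - b)) V`, and the cross terms cancel as in
`(x - y)(x' + y') + (x' - y')(x + y) = 2 (x x' - y y')`.
-/

open Finset

theorem sum_mul_sub_mul_sum_add_mul_add {ι R : Type*} [CommRing R] (K : Finset ι)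
    (p c a b : ι → R) :
    ∑ k ∈ K, p k * (a k - b k) * ∑ k' ∈ K, (c k' + c k) * p k' * (a k' + b k') =
      2 * ((∑ k ∈ K, p k * a k) * (∑ k ∈ K, p k * c k * a k)
        - (∑ k ∈ K, p k * b k) * (∑ k ∈ K, p k * c k * b k)) := by
  have inner : ∀ k, ∑ k' ∈ K, (c k' + c k) * p k' * (a k' + b k') =
      (∑ k' ∈ K, p k' * c k' * a k' + ∑ k' ∈ K, p k' * c k' * b k')
        + c k * (∑ k' ∈ K, p k' * a k' + ∑ k' ∈ K, p k' * b k') := by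
    intro k
    simp only [← sum_add_distrib, mul_sum]
    exact sum_congr rfl fun _ _ => by ring
  have outer : ∀ X Y : R, ∑ k ∈ K, p k * (a k - b k) * (X + c k * Y) =
      (∑ k ∈ K, p k * a k - ∑ k ∈ K, p k * b k) * X
        + (∑ k ∈ K, p k * c k * a k - ∑ k ∈ K, p k * c k * b k) * Y := by
    intro X Y
    simp only [← sum_sub_distrib, sum_mul, ← sum_add_distrib]
    exact sum_congr rfl fun _ _ => by ring
  simp only [inner, outer]
  ring

theorem zfun_eq (K : Finset ℕ) (p : ℕ → ℝ) (kbar : ℝ) (s : ℕ → ℕ → ℝ) (k i : ℕ) :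
    zfun K p kbar s k i =
      (2 * kbar)⁻¹ * ∑ k' ∈ K, ((k' : ℝ) + k) * p k' * (s k' i + s k' (i+1)) := by
  rw [zfun, mul_sum, mul_sum]
  exact sum_congr rfl fun _ _ => by ring

theorem aggregate_ode_general (K : Finset ℕ) (p : ℕ → ℝ)
    (kbar : ℝ)
    (xcl mu : ℝ)
    (s : ℝ → ℕ → ℕ → ℝ)
    (hode : ∀ τ : ℝ, ∀ k ∈ K, ∀ i : ℕ,
      HasDerivAt (fun τ' => s τ' k (i+1))
        (xcl * (s τ k i - s τ k (i+1)) * zfun K p kbar (s τ) k i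
          - mu * (s τ k (i+1) - s τ k (i+2))) τ) :
    ∀ τ : ℝ, ∀ i : ℕ,
      HasDerivAt (fun τ' => ∑ k ∈ K, p k * s τ' k (i+1))
        (xcl / kbar *
          ((∑ k ∈ K, p k * s τ k i) * (∑ k ∈ K, p k * (k : ℝ) * s τ k i)
            - (∑ k ∈ K, p k * s τ k (i+1)) * (∑ k ∈ K, p k * (k : ℝ) * s τ k (i+1)))
          - mu * ((∑ k ∈ K, p k * s τ k (i+1)) - (∑ k ∈ K, p k * s τ k (i+2)))) τ := by
  intro τ i
  refine (HasDerivAt.fun_sum fun k hk => (hode τ k hk i).const_mul (p k)).congr_deriv ?_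
  have key := sum_mul_sub_mul_sum_add_mul_add K p (fun k => (k : ℝ)) (s τ · i) (s τ · (i+1))
  simp only [zfun_eq]
  calc _ = xcl * (2 * kbar)⁻¹ * ∑ k ∈ K, p k * (s τ k i - s τ k (i + 1)) *
              ∑ k' ∈ K, ((k' : ℝ) + k) * p k' * (s τ k' i + s τ k' (i + 1))
          - mu * ((∑ k ∈ K, p k * s τ k (i+1)) - (∑ k ∈ K, p k * s τ k (i+2))) := by
        rw [mul_sum, ← sum_sub_distrib, mul_sum, ← sum_sub_distrib]
        exact sum_congr rfl fun _ _ => by ring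
    _ = _ := by
        rw [key, div_eq_mul_inv, mul_inv]
        ring

/-- The aggregate state `s_i = Σ_k p(k) s_{k,i}` satisfies
`ṡ_i = (x_cλ/k̄)(s_{i-1} s_{(k),i-1} - s_i s_{(k),i}) - μ (s_i - s_{i+1})`
(stated at level `i+1`, i.e. for all `i ≥ 1`). -/
theorem aggregate_ode (K : Finset ℕ) (p : ℕ → ℝ)
    (hp : ∀ k ∈ K, 0 ≤ p k) (hpsum : ∑ k ∈ K, p k = 1)
    (kbar : ℝ) (hkbar : kbar = ∑ k ∈ K, p k * (k : ℝ)) (hkpos : 0 < kbar)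
    (xcl mu : ℝ) (hx : 0 < xcl) (hmu : 0 < mu)
    (s : ℝ → ℕ → ℕ → ℝ)
    (hs0 : ∀ τ k, s τ k 0 = 1)
    (hode : ∀ τ : ℝ, ∀ k ∈ K, ∀ i : ℕ,
      HasDerivAt (fun τ' => s τ' k (i+1))
        (xcl * (s τ k i - s τ k (i+1)) * zfun K p kbar (s τ) k i
          - mu * (s τ k (i+1) - s τ k (i+2))) τ) :
    ∀ τ : ℝ, ∀ i : ℕ,
      HasDerivAt (fun τ' => ∑ k ∈ K, p k * s τ' k (i+1))
        (xcl / kbar *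
          ((∑ k ∈ K, p k * s τ k i) * (∑ k ∈ K, p k * (k : ℝ) * s τ k i)
            - (∑ k ∈ K, p k * s τ k (i+1)) * (∑ k ∈ K, p k * (k : ℝ) * s τ k (i+1)))
          - mu * ((∑ k ∈ K, p k * s τ k (i+1)) - (∑ k ∈ K, p k * s τ k (i+2)))) τ :=
  aggregate_ode_general K p kbar xcl mu s hode
end

section
/- At the stationary point of the graph mean field model, larger-degree users stochastically dominate smaller-degree ones: if k > k' (both in K), then s_{k,i}* ≥ s_{k',i}* for all i ≥ 0. -/
open Finset Filter

/-!
The increments `q_{k,i} = s_{k,i} - s_{k,i+1}` satisfy `μ q_{k,i+1} = x λ z_{k,i} q_{k,i}` with a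
rate `z_{k,i}` that is increasing in the degree `k`, so `q_{k,i} / q_{k',i}` is increasing in `i`
(likelihood-ratio order). This implies the stochastic order: splitting at `i`, the double sums
`Σ_{l<i} Σ_{m≥i} q_{k,l} q_{k',m} ≤ Σ_{l<i} Σ_{m≥i} q_{k',l} q_{k,m}` compare termwise, and they
equal `(1 - s_{k,i}) s_{k',i}` and `(1 - s_{k',i}) s_{k,i}`.
-/

noncomputable def increment (s : ℕ → ℝ) (i : ℕ) : ℝ := s i - s (i + 1)

/-- `b / a` is increasing, written without division. -/
def LikelihoodRatioLE (a b : ℕ → ℝ) : Prop :=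
  ∀ l m, l ≤ m → a m * b l ≤ b m * a l

theorem sum_range_increment (s : ℕ → ℝ) (n : ℕ) :
    ∑ l ∈ range n, increment s l = s 0 - s n :=
  sum_range_sub' s n

theorem Antitone.increment_nonneg {s : ℕ → ℝ} (hs : Antitone s) (i : ℕ) :
    0 ≤ increment s i :=
  sub_nonneg.2 (hs i.le_succ)

theorem Antitone.hasSum_increment {s : ℕ → ℝ} (hs : Antitone s)
    (h0 : Tendsto s atTop (nhds 0)) : HasSum (increment s) (s 0) := by
  rw [hasSum_iff_tendsto_nat_of_nonneg hs.increment_nonneg]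
  simp_rw [sum_range_increment]
  simpa using tendsto_const_nhds.sub h0

theorem Antitone.hasSum_increment_nat_add {s : ℕ → ℝ} (hs : Antitone s)
    (h0 : Tendsto s atTop (nhds 0)) (i : ℕ) :
    HasSum (fun j => increment s (j + i)) (s i) := by
  have := (hasSum_nat_add_iff' i).2 (hs.hasSum_increment h0)
  rwa [sum_range_increment, sub_sub_cancel] at this

theorem likelihoodRatioLE_of_rate_le {a b c d : ℕ → ℝ}
    (ha : ∀ i, a (i + 1) = c i * a i) (hb : ∀ i, b (i + 1) = d i * b i)
    (ha0 : ∀ i, 0 ≤ a i) (hb0 : ∀ i, 0 ≤ b i) (hc : ∀ i, 0 ≤ c i) (hcd : ∀ i, c i ≤ d i) :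
    LikelihoodRatioLE a b := by
  intro l m hlm
  induction m, hlm using Nat.le_induction with
  | base => rw [mul_comm]
  | succ m _ ih =>
    rw [ha, hb]
    calc c m * a m * b l
        = c m * (a m * b l) := by ring
      _ ≤ c m * (b m * a l) := mul_le_mul_of_nonneg_left ih (hc m)
      _ ≤ d m * (b m * a l) := mul_le_mul_of_nonneg_right (hcd m) (mul_nonneg (hb0 m) (ha0 l))
      _ = d m * b m * a l := by ring

theorem LikelihoodRatioLE.mul_le_mul {s t : ℕ → ℝ} (hs : Antitone s) (ht : Antitone t)
    (hs0 : Tendsto s atTop (nhds 0)) (ht0 : Tendsto t atTop (nhds 0))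
    (h : LikelihoodRatioLE (increment s) (increment t)) (i : ℕ) :
    t 0 * s i ≤ s 0 * t i := by
  have cross : (t 0 - t i) * s i ≤ (s 0 - s i) * t i := by
    rw [← sum_range_increment, ← sum_range_increment]
    refine hasSum_le (fun j => ?_) ((hs.hasSum_increment_nat_add hs0 i).mul_left _)
      ((ht.hasSum_increment_nat_add ht0 i).mul_left _)
    rw [sum_mul, sum_mul]
    refine sum_le_sum fun l hl => ?_
    linarith [h l (j + i) (by have := mem_range.1 hl; omega)]
  linarith

section GraphMeanField

variable {K : Finset ℕ} {p : ℕ → ℝ} {kbar : ℝ} {s : ℕ → ℕ → ℝ}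

theorem zfun_mono (hp : ∀ k ∈ K, 0 ≤ p k) (hkbar : 0 ≤ kbar)
    (hs : ∀ k ∈ K, ∀ i, 0 ≤ s k i) {k k' : ℕ} (hk : k' ≤ k) (i : ℕ) :
    zfun K p kbar s k' i ≤ zfun K p kbar s k i := by
  unfold zfun
  gcongr with k₁ hk₁
  · exact add_nonneg (hs k₁ hk₁ i) (hs k₁ hk₁ (i + 1))
  · exact hp k₁ hk₁

end GraphMeanField

theorem degree_monotonicity_general (K : Finset ℕ) (p : ℕ → ℝ)
    (hp : ∀ k ∈ K, 0 ≤ p k)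
    (kbar : ℝ) (hkpos : 0 < kbar)
    (xcl mu : ℝ) (hx : 0 < xcl) (hmu : 0 < mu)
    (s : ℕ → ℕ → ℝ)
    (hs0 : ∀ k, s k 0 = 1) (hmono : ∀ k i, s k (i+1) ≤ s k i)
    (hlim : ∀ k ∈ K, Filter.Tendsto (fun i => s k i) Filter.atTop (nhds 0))
    (hstat : ∀ k ∈ K, ∀ i : ℕ,
      xcl * (s k i - s k (i+1)) * zfun K p kbar s k i = mu * (s k (i+1) - s k (i+2))) :
    ∀ k ∈ K, ∀ k' ∈ K, k' < k → ∀ i : ℕ, s k' i ≤ s k i := by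
  intro k hk k' hk' hlt i
  have hanti : ∀ m, Antitone (s m) := fun m => antitone_nat_of_succ_le (hmono m)
  have hnn : ∀ m ∈ K, ∀ i, 0 ≤ s m i := fun m hm => (hanti m).le_of_tendsto (hlim m hm)
  have hrec : ∀ m ∈ K, ∀ i, increment (s m) (i + 1)
      = xcl * zfun K p kbar s m i / mu * increment (s m) i := fun m hm i => by
    rw [div_mul_eq_mul_div, eq_div_iff hmu.ne', increment, increment]
    linarith [hstat m hm i]
  have hratio : LikelihoodRatioLE (increment (s k')) (increment (s k)) :=
    likelihoodRatioLE_of_rate_le (hrec k' hk') (hrec k hk)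
      (hanti k').increment_nonneg (hanti k).increment_nonneg
      (fun i => div_nonneg (mul_nonneg hx.le (zfun_nonneg hp hkpos.le hnn k' i)) hmu.le)
      (fun i => div_le_div_of_nonneg_right (mul_le_mul_of_nonneg_left
        (zfun_mono hp hkpos.le hnn hlt.le i) hx.le) hmu.le)
  simpa [hs0] using hratio.mul_le_mul (hanti k') (hanti k) (hlim k' hk') (hlim k hk) i

/-- At the stationary point, larger-degree users have stochastically larger workloads:
`k > k'` implies `s_{k,i}* ≥ s_{k',i}*` for all `i`. -/
theorem degree_monotonicity (K : Finset ℕ) (p : ℕ → ℝ)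
    (hp : ∀ k ∈ K, 0 ≤ p k) (hpsum : ∑ k ∈ K, p k = 1)
    (kbar : ℝ) (hkbar : kbar = ∑ k ∈ K, p k * (k : ℝ)) (hkpos : 0 < kbar)
    (xcl mu : ℝ) (hx : 0 < xcl) (hmu : 0 < mu)
    (s : ℕ → ℕ → ℝ)
    (hs0 : ∀ k, s k 0 = 1) (hmono : ∀ k i, s k (i+1) ≤ s k i)
    (hnn : ∀ k i, 0 ≤ s k i)
    (hlim : ∀ k ∈ K, Filter.Tendsto (fun i => s k i) Filter.atTop (nhds 0))
    (hstat : ∀ k ∈ K, ∀ i : ℕ,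
      xcl * (s k i - s k (i+1)) * zfun K p kbar s k i = mu * (s k (i+1) - s k (i+2))) :
    ∀ k ∈ K, ∀ k' ∈ K, k' < k → ∀ i : ℕ, s k' i ≤ s k i :=
  degree_monotonicity_general K p hp kbar hkpos xcl mu hx hmu s hs0 hmono hlim hstat
end

section
/- Let δ₁ = k_max/k̄ and suppose ((1+δ₁)/2)·(x_cλ/μ) < 1. Then every coordinate of the stationary point of the graph mean field model is bounded above by the classical Po2 expression with inflated rate: s_{k,i}* ≤ (((1+δ₁)/2)·(x_cλ/μ))^(2^i − 1) for all k ∈ K and i ≥ 0. -/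
open Finset Filter

/-- Upper bound on the stationary point by the inflated classical Po2 expression:
with `δ₁ = k_max/k̄` and `((1+δ₁)/2)(x_cλ/μ) < 1`,
`s_{k,i}* ≤ (((1+δ₁)/2)(x_cλ/μ))^(2^i - 1)`. -/
theorem stationary_point_upper_bound (K : Finset ℕ) (p : ℕ → ℝ)
    (hp : ∀ k ∈ K, 0 ≤ p k) (hpsum : ∑ k ∈ K, p k = 1)
    (kbar : ℝ) (hkbar : kbar = ∑ k ∈ K, p k * (k : ℝ)) (hkpos : 0 < kbar)
    (kmax : ℕ) (hkmaxmem : kmax ∈ K) (hkmax : ∀ k ∈ K, k ≤ kmax)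
    (xcl mu : ℝ) (hx : 0 < xcl) (hmu : 0 < mu)
    (hstab : (1 + (kmax : ℝ) / kbar) / 2 * (xcl / mu) < 1)
    (s : ℕ → ℕ → ℝ)
    (hs0 : ∀ k, s k 0 = 1) (hmono : ∀ k i, s k (i+1) ≤ s k i)
    (hnn : ∀ k i, 0 ≤ s k i)
    (hlim : ∀ k ∈ K, Filter.Tendsto (fun i => s k i) Filter.atTop (nhds 0))
    (hdegmono : ∀ k ∈ K, ∀ i : ℕ, s k i ≤ s kmax i)
    (hstat : ∀ k ∈ K, ∀ i : ℕ,
      xcl * (s k i - s k (i+1)) * zfun K p kbar s k i = mu * (s k (i+1) - s k (i+2))) :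
    ∀ k ∈ K, ∀ i : ℕ,
      s k i ≤ ((1 + (kmax : ℝ) / kbar) / 2 * (xcl / mu)) ^ (2 ^ i - 1) := by
  set c : ℝ := (1 + (kmax : ℝ) / kbar) / 2 * (xcl / mu) with hc
  set t : ℕ → ℝ := s kmax with ht
  have hδnn : (0:ℝ) ≤ (1 + (kmax : ℝ) / kbar) / 2 := by positivity
  have hcnn : 0 ≤ c := by positivity
  -- sum of the coefficients
  have hsumcoef : ∑ k' ∈ K, (((k' : ℝ) + (kmax : ℝ)) / kbar) * p k'
      = 1 + (kmax : ℝ) / kbar := by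
    have h1 : ∀ k' ∈ K, (((k' : ℝ) + (kmax : ℝ)) / kbar) * p k'
        = (p k' * (k' : ℝ) + (kmax : ℝ) * p k') / kbar := by
      intro k' _; ring
    rw [Finset.sum_congr rfl h1, ← Finset.sum_div, Finset.sum_add_distrib,
      ← Finset.mul_sum, hpsum, ← hkbar]
    field_simp
  -- bound on z at kmax
  have hz : ∀ j, zfun K p kbar s kmax j
      ≤ (1 + (kmax : ℝ) / kbar) / 2 * (t j + t (j+1)) := by
    intro j
    have hb : ∑ k' ∈ K, (((k' : ℝ) + (kmax : ℝ)) / kbar) * p k' * (s k' j + s k' (j+1))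
        ≤ ∑ k' ∈ K, (((k' : ℝ) + (kmax : ℝ)) / kbar) * p k' * (t j + t (j+1)) := by
      apply Finset.sum_le_sum
      intro k' hk'
      have hco : 0 ≤ (((k' : ℝ) + (kmax : ℝ)) / kbar) * p k' := by
        have := hp k' hk'
        positivity
      exact mul_le_mul_of_nonneg_left
        (add_le_add (hdegmono k' hk' j) (hdegmono k' hk' (j+1))) hco
    calc zfun K p kbar s kmax j ≤ (1/2) * ∑ k' ∈ K,
          (((k' : ℝ) + (kmax : ℝ)) / kbar) * p k' * (t j + t (j+1)) := by
          unfold zfun; linarith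
      _ = (1 + (kmax : ℝ) / kbar) / 2 * (t j + t (j+1)) := by
          rw [← Finset.sum_mul, hsumcoef]; ring
  -- one-step inequality
  have hstep : ∀ j, mu * (t (j+1) - t (j+2))
      ≤ xcl * ((1 + (kmax : ℝ) / kbar) / 2) * (t j ^ 2 - t (j+1) ^ 2) := by
    intro j
    have heq := hstat kmax hkmaxmem j
    have hd : 0 ≤ t j - t (j+1) := by
      have := hmono kmax j; simp only [ht]; linarith
    have hzb := hz j
    have : xcl * (t j - t (j+1)) * zfun K p kbar s kmax j
        ≤ xcl * (t j - t (j+1)) * ((1 + (kmax : ℝ) / kbar) / 2 * (t j + t (j+1))) := by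
      apply mul_le_mul_of_nonneg_left hzb
      positivity
    have h2 : xcl * (t j - t (j+1)) * ((1 + (kmax : ℝ) / kbar) / 2 * (t j + t (j+1)))
        = xcl * ((1 + (kmax : ℝ) / kbar) / 2) * (t j ^ 2 - t (j+1) ^ 2) := by ring
    rw [h2] at this
    calc mu * (t (j+1) - t (j+2)) = xcl * (t j - t (j+1)) * zfun K p kbar s kmax j := by
          rw [heq]
      _ ≤ _ := this
  -- telescoped partial sums
  have htel : ∀ i n, mu * (t (i+1) - t (i+1+n))
      ≤ xcl * ((1 + (kmax : ℝ) / kbar) / 2) * (t i ^ 2 - t (i+n) ^ 2) := by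
    intro i n
    induction n with
    | zero => simp
    | succ n ih =>
      have := hstep (i + n)
      have e1 : i + n + 1 = i + (n+1) := by ring
      have e2 : i + n + 2 = i + 1 + (n + 1) := by ring
      have e3 : i + 1 + n = i + (n + 1) := by ring
      rw [e1, e2] at this
      rw [e3] at ih
      linarith
  -- limit step: mu * t (i+1) ≤ xcl * ((1+δ)/2) * t i ^ 2
  have hkey : ∀ i, mu * t (i+1) ≤ xcl * ((1 + (kmax : ℝ) / kbar) / 2) * t i ^ 2 := by
    intro i
    have hlimt : Filter.Tendsto (fun n => xcl * ((1 + (kmax : ℝ) / kbar) / 2) * t i ^ 2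
        + mu * t (i + 1 + n)) Filter.atTop
        (nhds (xcl * ((1 + (kmax : ℝ) / kbar) / 2) * t i ^ 2)) := by
      have h0 : Filter.Tendsto (fun n => t (i + 1 + n)) Filter.atTop (nhds 0) :=
        (hlim kmax hkmaxmem).comp (tendsto_atTop_atTop_of_monotone
          (fun a b h => by omega) (fun b => ⟨b, by omega⟩))
      have := h0.const_mul mu
      simpa using (tendsto_const_nhds.add this)
    refine ge_of_tendsto hlimt (Filter.Eventually.of_forall (fun n => ?_))
    have h1 := htel i n
    have h2 : 0 ≤ t (i + n) ^ 2 := sq_nonneg _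
    have h3 : 0 ≤ xcl * ((1 + (kmax : ℝ) / kbar) / 2) := by positivity
    nlinarith [mul_le_mul_of_nonneg_left h2 h3]
  -- main induction at kmax
  have hmain : ∀ i, t i ≤ c ^ (2 ^ i - 1) := by
    intro i
    induction i with
    | zero => simp [ht, hs0]
    | succ i ih =>
      have hkeyi := hkey i
      have htnn : 0 ≤ t i := hnn kmax i
      have hsq : t i ^ 2 ≤ (c ^ (2 ^ i - 1)) ^ 2 := by
        apply pow_le_pow_left₀ htnn ih
      have h4 : mu * t (i+1) ≤ xcl * ((1 + (kmax : ℝ) / kbar) / 2)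
          * (c ^ (2 ^ i - 1)) ^ 2 := by
        have h3 : 0 ≤ xcl * ((1 + (kmax : ℝ) / kbar) / 2) := by positivity
        calc mu * t (i+1) ≤ xcl * ((1 + (kmax : ℝ) / kbar) / 2) * t i ^ 2 := hkeyi
          _ ≤ _ := mul_le_mul_of_nonneg_left hsq h3
      have hexp : 2 ^ (i+1) - 1 = (2 ^ i - 1) + (2 ^ i - 1) + 1 := by
        have : 1 ≤ 2 ^ i := Nat.one_le_two_pow
        omega
      have hrhs : c ^ (2 ^ (i+1) - 1)
          = xcl * ((1 + (kmax : ℝ) / kbar) / 2) * (c ^ (2 ^ i - 1)) ^ 2 / mu := by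
        rw [hexp, pow_add, pow_add, pow_one, hc]
        field_simp
      rw [hrhs]
      rw [le_div_iff₀ hmu]
      linarith
  intro k hk i
  exact le_trans (hdegmono k hk i) (hmain i)
end

section
/- Let δ₂ = k_min/k̄. Then the stationary point of the graph mean field model satisfies the lower bound s_{k,i}* ≥ (((1+δ₂)/2)·(x_cλ/μ))^(2^i − 1) for all k ∈ K and i ≥ 0. -/
/-!
Bounding every `s_{k',·}` in `z_{k_min,i}` from below by `s_{k_min,·}` turns the stationarity
equation at `k_min` into `a (s_i² - s_{i+1}²) ≤ μ (s_{i+1} - s_{i+2})` with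
`a = x_cλ (1 + δ₂)/2`. Summing this telescoping inequality from `i` to `∞` (the sequence tends
to `0`) gives `a s_i² ≤ μ s_{i+1}`, and iterating the quadratic recursion
`c s_i² ≤ s_{i+1}`, `c = a/μ`, from `s_0 = 1` yields `s_i ≥ c^(2^i - 1)`.
-/

open Finset Filter

theorem mul_sq_le_of_tendsto_zero {t : ℕ → ℝ} {a m : ℝ} (ht : Tendsto t atTop (nhds 0))
    (h : ∀ i, a * (t i ^ 2 - t (i+1) ^ 2) ≤ m * (t (i+1) - t (i+2))) (i : ℕ) :
    a * t i ^ 2 ≤ m * t (i+1) := by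
  let g : ℕ → ℝ := fun j => m * t (j+1) - a * t j ^ 2
  have hg : Antitone g := antitone_nat_of_succ_le fun j => by
    simp only [g]
    linarith [h j]
  have hg0 : Tendsto g atTop (nhds 0) := by
    simpa using ((ht.comp (tendsto_add_atTop_nat 1)).const_mul m).sub ((ht.pow 2).const_mul a)
  linarith [hg.le_of_tendsto hg0 i]

theorem pow_two_pow_sub_one_le {u : ℕ → ℝ} {c : ℝ} (hc : 0 ≤ c) (h0 : 1 ≤ u 0)
    (hu : ∀ i, c * u i ^ 2 ≤ u (i+1)) (i : ℕ) : c ^ (2 ^ i - 1) ≤ u i := by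
  induction i with
  | zero => simpa using h0
  | succ i ih =>
    have hexp : 2 ^ (i+1) - 1 = 2 * (2 ^ i - 1) + 1 := by
      have := Nat.one_le_two_pow (n := i)
      rw [pow_succ]
      omega
    calc c ^ (2 ^ (i+1) - 1) = c * (c ^ (2 ^ i - 1)) ^ 2 := by
          rw [hexp, pow_succ, pow_mul]
          ring
      _ ≤ c * u i ^ 2 := by gcongr
      _ ≤ u (i+1) := hu i

theorem sum_add_div_mul_eq_one_add_div {K : Finset ℕ} {p : ℕ → ℝ} {kbar : ℝ}
    (hpsum : ∑ k ∈ K, p k = 1) (hkbar : kbar = ∑ k ∈ K, p k * (k : ℝ)) (hkbar0 : kbar ≠ 0)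
    (k : ℕ) : ∑ k' ∈ K, (((k' : ℝ) + (k : ℝ)) / kbar) * p k' = 1 + (k : ℝ) / kbar := by
  have hsplit : ∑ k' ∈ K, (((k' : ℝ) + (k : ℝ)) / kbar) * p k'
      = ((∑ k' ∈ K, p k' * (k' : ℝ)) + (k : ℝ) * ∑ k' ∈ K, p k') / kbar := by
    rw [Finset.mul_sum, ← Finset.sum_add_distrib, Finset.sum_div]
    refine Finset.sum_congr rfl fun k' _ => ?_
    ring
  rw [hsplit, ← hkbar, hpsum]
  field_simp

theorem le_zfun_of_forall_le {K : Finset ℕ} {p : ℕ → ℝ} {kbar : ℝ} {s : ℕ → ℕ → ℝ} {k : ℕ}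
    (hp : ∀ k ∈ K, 0 ≤ p k) (hpsum : ∑ k ∈ K, p k = 1)
    (hkbar : kbar = ∑ k ∈ K, p k * (k : ℝ)) (hkpos : 0 < kbar)
    (hle : ∀ k' ∈ K, ∀ i, s k i ≤ s k' i) (i : ℕ) :
    (1 + (k : ℝ) / kbar) / 2 * (s k i + s k (i+1)) ≤ zfun K p kbar s k i := by
  calc (1 + (k : ℝ) / kbar) / 2 * (s k i + s k (i+1))
      = 1 / 2 * ∑ k' ∈ K, (((k' : ℝ) + k) / kbar) * p k' * (s k i + s k (i+1)) := by
        rw [← Finset.sum_mul, sum_add_div_mul_eq_one_add_div hpsum hkbar hkpos.ne' k]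
        ring
    _ ≤ zfun K p kbar s k i := by
        unfold zfun
        gcongr with k' hk'
        · exact mul_nonneg (div_nonneg (by positivity) hkpos.le) (hp k' hk')
        · exact hle k' hk' i
        · exact hle k' hk' (i+1)

theorem stationary_point_lower_bound_general (K : Finset ℕ) (p : ℕ → ℝ)
    (hp : ∀ k ∈ K, 0 ≤ p k) (hpsum : ∑ k ∈ K, p k = 1)
    (kbar : ℝ) (hkbar : kbar = ∑ k ∈ K, p k * (k : ℝ)) (hkpos : 0 < kbar)
    (kmin : ℕ) (hkminmem : kmin ∈ K)
    (xcl mu : ℝ) (hx : 0 < xcl) (hmu : 0 < mu)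
    (s : ℕ → ℕ → ℝ)
    (hs0 : ∀ k, s k 0 = 1) (hmono : ∀ k i, s k (i+1) ≤ s k i)
    (hlim : ∀ k ∈ K, Filter.Tendsto (fun i => s k i) Filter.atTop (nhds 0))
    (hdegmono : ∀ k ∈ K, ∀ i : ℕ, s kmin i ≤ s k i)
    (hstat : ∀ k ∈ K, ∀ i : ℕ,
      xcl * (s k i - s k (i+1)) * zfun K p kbar s k i = mu * (s k (i+1) - s k (i+2))) :
    ∀ k ∈ K, ∀ i : ℕ,
      ((1 + (kmin : ℝ) / kbar) / 2 * (xcl / mu)) ^ (2 ^ i - 1) ≤ s k i := by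
  intro k hk i
  set δ : ℝ := (kmin : ℝ) / kbar
  have hδ : 0 ≤ δ := div_nonneg (Nat.cast_nonneg _) hkpos.le
  have htelescope : ∀ j, xcl * ((1 + δ) / 2) * (s kmin j ^ 2 - s kmin (j+1) ^ 2)
      ≤ mu * (s kmin (j+1) - s kmin (j+2)) := fun j => by
    rw [← hstat kmin hkminmem j]
    calc xcl * ((1 + δ) / 2) * (s kmin j ^ 2 - s kmin (j+1) ^ 2)
        = xcl * (s kmin j - s kmin (j+1)) * ((1 + δ) / 2 * (s kmin j + s kmin (j+1))) := by ring
      _ ≤ xcl * (s kmin j - s kmin (j+1)) * zfun K p kbar s kmin j :=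
        mul_le_mul_of_nonneg_left (le_zfun_of_forall_le hp hpsum hkbar hkpos hdegmono j)
          (mul_nonneg hx.le (sub_nonneg.2 (hmono kmin j)))
  have hrec : ∀ j, (1 + δ) / 2 * (xcl / mu) * s kmin j ^ 2 ≤ s kmin (j+1) := fun j => by
    have := mul_sq_le_of_tendsto_zero (hlim kmin hkminmem) htelescope j
    calc (1 + δ) / 2 * (xcl / mu) * s kmin j ^ 2 = xcl * ((1 + δ) / 2) * s kmin j ^ 2 / mu := by
          ring
      _ ≤ s kmin (j+1) := by rwa [div_le_iff₀ hmu, mul_comm _ mu]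
  have hc : 0 ≤ (1 + δ) / 2 * (xcl / mu) := by positivity
  exact (pow_two_pow_sub_one_le hc (hs0 kmin).ge hrec i).trans (hdegmono k hk i)

/-- Lower bound on the stationary point by the deflated classical Po2 expression:
with `δ₂ = k_min/k̄`, `s_{k,i}* ≥ (((1+δ₂)/2)(x_cλ/μ))^(2^i - 1)`. -/
theorem stationary_point_lower_bound (K : Finset ℕ) (p : ℕ → ℝ)
    (hp : ∀ k ∈ K, 0 ≤ p k) (hpsum : ∑ k ∈ K, p k = 1)
    (kbar : ℝ) (hkbar : kbar = ∑ k ∈ K, p k * (k : ℝ)) (hkpos : 0 < kbar)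
    (kmin : ℕ) (hkminmem : kmin ∈ K) (hkmin : ∀ k ∈ K, kmin ≤ k)
    (xcl mu : ℝ) (hx : 0 < xcl) (hmu : 0 < mu) (hxmu : xcl / mu < 1)
    (s : ℕ → ℕ → ℝ)
    (hs0 : ∀ k, s k 0 = 1) (hmono : ∀ k i, s k (i+1) ≤ s k i)
    (hnn : ∀ k i, 0 ≤ s k i)
    (hlim : ∀ k ∈ K, Filter.Tendsto (fun i => s k i) Filter.atTop (nhds 0))
    (hdegmono : ∀ k ∈ K, ∀ i : ℕ, s kmin i ≤ s k i)
    (hstat : ∀ k ∈ K, ∀ i : ℕ,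
      xcl * (s k i - s k (i+1)) * zfun K p kbar s k i = mu * (s k (i+1) - s k (i+2))) :
    ∀ k ∈ K, ∀ i : ℕ,
      ((1 + (kmin : ℝ) / kbar) / 2 * (xcl / mu)) ^ (2 ^ i - 1) ≤ s k i :=
  stationary_point_lower_bound_general K p hp hpsum kbar hkbar hkpos kmin hkminmem xcl mu hx hmu s
    hs0 hmono hlim hdegmono hstat
end

section
/- At the stationary point of the graph mean field model, the average busy probability equals the collaborative load: s₁* := Σ_{k∈K} p(k)·s_{k,1}* = x_cλ/μ. -/
open Filter

/-- At the stationary point of the graph mean field model, the average busy probability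
equals the collaborative load: `s₁* = x_cλ/μ`. Here `s i` is the aggregate
`Σ_k p(k) s_{k,i}*` and `S i` is `Σ_k p(k) k s_{k,i}*`, with `s 0 = 1`, `S 0 = k̄`. -/
theorem busy_probability (kbar xcl mu : ℝ)
    (hkbar : 0 < kbar) (hx : 0 < xcl) (hmu : 0 < mu) (hxmu : xcl < mu)
    (s S : ℕ → ℝ) (hs0 : s 0 = 1) (hS0 : S 0 = kbar)
    (hsmono : ∀ i, s (i+1) ≤ s i) (hsnn : ∀ i, 0 ≤ s i)
    (hSmono : ∀ i, S (i+1) ≤ S i) (hSnn : ∀ i, 0 ≤ S i)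
    (hstat : ∀ i : ℕ,
      xcl / kbar * (s i * S i - s (i+1) * S (i+1)) = mu * (s (i+1) - s (i+2)))
    (hlim : Tendsto s atTop (nhds 0)) :
    s 1 = xcl / mu := by
  -- telescoped identity
  have htel : ∀ N : ℕ,
      xcl / kbar * (s 0 * S 0 - s N * S N) = mu * (s 1 - s (N+1)) := by
    intro N
    induction N with
    | zero => ring
    | succ n ih =>
      have h := hstat n
      nlinarith [h, ih]
  -- S is bounded by kbar
  have hSb : ∀ N, S N ≤ kbar := by
    intro N
    induction N with
    | zero => rw [hS0]
    | succ n ih => exact le_trans (hSmono n) ih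
  -- s N * S N → 0
  have hsS : Tendsto (fun N => s N * S N) atTop (nhds 0) := by
    have h0 : Tendsto (fun N => kbar * s N) atTop (nhds 0) := by
      have := hlim.const_mul kbar
      simpa using this
    refine squeeze_zero (fun N => mul_nonneg (hsnn N) (hSnn N)) (fun N => ?_) h0
    calc s N * S N ≤ s N * kbar := mul_le_mul_of_nonneg_left (hSb N) (hsnn N)
      _ = kbar * s N := mul_comm _ _
  -- limits of both sides
  have hL : Tendsto (fun N => xcl / kbar * (s 0 * S 0 - s N * S N)) atTop
      (nhds (xcl / kbar * (s 0 * S 0 - 0))) :=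
    (tendsto_const_nhds.sub hsS).const_mul _
  have hR : Tendsto (fun N => mu * (s 1 - s (N+1))) atTop
      (nhds (mu * (s 1 - 0))) := by
    have : Tendsto (fun N => s (N+1)) atTop (nhds 0) :=
      hlim.comp (tendsto_add_atTop_nat 1)
    exact (tendsto_const_nhds.sub this).const_mul _
  have heq : xcl / kbar * (s 0 * S 0 - 0) = mu * (s 1 - 0) := by
    refine tendsto_nhds_unique ?_ hR
    have : (fun N => xcl / kbar * (s 0 * S 0 - s N * S N))
        = fun N => mu * (s 1 - s (N+1)) := funext htel
    rwa [this] at hL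
  rw [hs0, hS0] at heq
  field_simp at heq ⊢
  have hk0 : kbar * (mu * s 1 - xcl) = 0 := by linarith [heq]
  linarith [(mul_eq_zero.mp hk0).resolve_left hkbar.ne']
end

section
/- At the stationary point of the graph mean field model, the aggregate state satisfies the recursion s_i* = (x_cλ/(k̄·μ))·s_{i-1}*·s_{(k),i-1}* for all i ≥ 1. -/
open Filter

/-- At the stationary point of the graph mean field model, the aggregate state satisfies
`s_i* = (x_cλ/(k̄ μ)) s_{i-1}* s_{(k),i-1}*` for all `i ≥ 1` (stated with `i+1`). -/
theorem aggregate_recursion (kbar xcl mu : ℝ)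
    (hkbar : 0 < kbar) (hx : 0 < xcl) (hmu : 0 < mu) (hxmu : xcl < mu)
    (s S : ℕ → ℝ) (hs0 : s 0 = 1) (hS0 : S 0 = kbar)
    (hsmono : ∀ i, s (i+1) ≤ s i) (hsnn : ∀ i, 0 ≤ s i)
    (hSmono : ∀ i, S (i+1) ≤ S i) (hSnn : ∀ i, 0 ≤ S i)
    (hstat : ∀ i : ℕ,
      xcl / kbar * (s i * S i - s (i+1) * S (i+1)) - mu * (s (i+1) - s (i+2)) = 0)
    (hslim : Tendsto s atTop (nhds 0)) (hSlim : Tendsto S atTop (nhds 0)) :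
    ∀ i : ℕ, s (i+1) = xcl / (kbar * mu) * s i * S i := by
  set T : ℕ → ℝ := fun i => xcl / kbar * (s i * S i) - mu * s (i+1) with hT
  have hstep : ∀ i, T (i+1) = T i := by
    intro i
    have h := hstat i
    simp only [hT]
    ring_nf
    ring_nf at h
    linarith
  have hconst : ∀ i, T i = T 0 := by
    intro i
    induction i with
    | zero => rfl
    | succ n ih => rw [hstep n, ih]
  -- T tends to 0
  have hslim1 : Tendsto (fun i => s (i+1)) atTop (nhds 0) :=
    hslim.comp (tendsto_add_atTop_nat 1)
  have hTlim : Tendsto T atTop (nhds 0) := by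
    have : Tendsto (fun i => xcl / kbar * (s i * S i) - mu * s (i+1)) atTop
        (nhds (xcl / kbar * (0 * 0) - mu * 0)) :=
      (tendsto_const_nhds.mul (hslim.mul hSlim)).sub (tendsto_const_nhds.mul hslim1)
    simpa using this
  have hTlim' : Tendsto T atTop (nhds (T 0)) := by
    have : T = fun _ => T 0 := funext hconst
    rw [this]; exact tendsto_const_nhds
  have hT0 : T 0 = 0 := tendsto_nhds_unique hTlim' hTlim
  intro i
  have h : xcl / kbar * (s i * S i) - mu * s (i+1) = 0 := by
    have := hconst i
    simp only [hT] at this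
    rw [this]
    simpa [hT] using hT0
  have hk : kbar ≠ 0 := ne_of_gt hkbar
  have hm : mu ≠ 0 := ne_of_gt hmu
  field_simp at h ⊢
  linarith
end

section
/- Under the threshold pricing policy p[n] = ρ_c^m/μ² − ρ_t^m·B/r if X[n] ≤ X* and p[n] = p_u otherwise (with corresponding offloading decision x[n] = x_u in the first case and x[n] = x_l in the second), starting from X[0] = 0, the queue backlog is uniformly bounded: X[n] ≤ X* + x_uλ − x̄ for all n, where X* = (V·x_u·(ρ_c^m/μ² − ρ_t^m·B/r) − V·x_l·p_u)/(x_u − x_l) − V·ρ_c^s/γ. -/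
/-- Under the threshold pricing policy, the virtual queue backlog is uniformly bounded by
`X* + x_u λ - x̄`. -/
theorem queue_backlog_bounded (lam xbar xl xu V pu rhocm mu rhotm B r rhocs gamma : ℝ)
    (hxl : 0 ≤ xl) (hlu : xl < xu) (hxu : xu ≤ 1)
    (hmu : 0 < mu) (hr : 0 < r) (hgamma : 0 < gamma)
    (hxbar1 : xl * lam < xbar) (hxbar2 : xbar < xu * lam) (hxbarlam : xbar < lam)
    (hV : 0 < V) (hpm : 0 < rhocm / mu^2 - rhotm * B / r)
    (hpu : rhocm / mu^2 - rhotm * B / r < pu)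
    (Xstar : ℝ)
    (hXstar : Xstar = (V * xu * (rhocm / mu^2 - rhotm * B / r) - V * xl * pu) / (xu - xl)
      - V * rhocs / gamma)
    (hXstar0 : 0 ≤ Xstar)
    (X x : ℕ → ℝ)
    (hX0 : X 0 = 0)
    (hrec : ∀ n : ℕ, X (n+1) = max (X n + x n * lam - xbar) 0)
    (hpolicy : ∀ n : ℕ, x n = if X n ≤ Xstar then xu else xl) :
    ∀ n : ℕ, X n ≤ Xstar + xu * lam - xbar := by
  have hbound0 : (0:ℝ) ≤ Xstar + xu * lam - xbar := by linarith
  intro n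
  induction n with
  | zero => rw [hX0]; exact hbound0
  | succ n ih =>
    rw [hrec n, hpolicy n]
    by_cases h : X n ≤ Xstar
    · simp only [if_pos h]
      apply max_le _ hbound0
      linarith
    · simp only [if_neg h]
      apply max_le _ hbound0
      linarith
end

section
/- Suppose in every slot n the per-slot drift-minus-utility bound is minimized so that Δ(X[n]) − V·E[u[n] | X[n]] ≤ D − V·u*, with X[0] = 0. Then the achieved long-term average utility satisfies liminf_{T→∞} (1/T)·Σ_{n=0}^{T−1} E[u[n]] ≥ u* − D/V. -/
open Filter

/-! Summing the drift inequality over `n < T` telescopes the drift to `L T - L 0 = L T ≥ 0`, so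
`V * ∑_{n<T} u n ≥ T * (V * u* - D)`. Dividing by `V * T` bounds every running average of `u`
below by `u* - D / V`; the upper bound on `u` keeps the averages bounded, so that the real
`liminf` is the genuine one and inherits this bound. -/

theorem sub_sub_sum_range_le_of_forall_sub_le {f g : ℕ → ℝ} {c : ℝ}
    (h : ∀ n, f (n + 1) - f n - g n ≤ c) (T : ℕ) :
    f T - f 0 - ∑ n ∈ Finset.range T, g n ≤ T * c := by
  have hsum := Finset.sum_le_sum fun n (_ : n ∈ Finset.range T) => h n
  rwa [Finset.sum_sub_distrib, Finset.sum_range_sub, Finset.sum_const, Finset.card_range,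
    nsmul_eq_mul] at hsum

theorem mul_sub_div_le_sum_of_drift_le {V D ustar : ℝ} {L u : ℕ → ℝ} (hV : 0 < V)
    (hL0 : L 0 = 0) (hLT : ∀ n, 0 ≤ L n)
    (hdrift : ∀ n, (L (n + 1) - L n) - V * u n ≤ D - V * ustar) (T : ℕ) :
    T * (ustar - D / V) ≤ ∑ n ∈ Finset.range T, u n := by
  have htel := sub_sub_sum_range_le_of_forall_sub_le hdrift T
  rw [hL0, ← Finset.mul_sum] at htel
  have hscaled : V * (T * (ustar - D / V)) ≤ V * ∑ n ∈ Finset.range T, u n := by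
    have hexpand : V * (T * (ustar - D / V)) = T * (V * ustar - D) := by
      field_simp
    nlinarith [hLT T]
  exact le_of_mul_le_mul_left hscaled hV

theorem one_div_mul_sum_range_le {u : ℕ → ℝ} {M : ℝ} (hu : ∀ n, u n ≤ M) {T : ℕ}
    (hT : 0 < T) : 1 / (T : ℝ) * ∑ n ∈ Finset.range T, u n ≤ M := by
  have hsum : ∑ n ∈ Finset.range T, u n ≤ T * M := by
    simpa using Finset.sum_le_sum fun n (_ : n ∈ Finset.range T) => hu n
  rw [one_div_mul_eq_div, div_le_iff₀ (by exact_mod_cast hT)]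
  linarith

theorem le_liminf_one_div_mul_sum_range {u : ℕ → ℝ} {a M : ℝ}
    (hsum : ∀ T : ℕ, T * a ≤ ∑ n ∈ Finset.range T, u n) (hu : ∀ n, u n ≤ M) :
    a ≤ atTop.liminf (fun T : ℕ => 1 / (T : ℝ) * ∑ n ∈ Finset.range T, u n) := by
  apply le_liminf_of_le
  · exact isCoboundedUnder_ge_of_eventually_le atTop
      ((eventually_gt_atTop 0).mono fun T hT => one_div_mul_sum_range_le hu hT)
  · filter_upwards [eventually_gt_atTop 0] with T hT
    rw [one_div_mul_eq_div, le_div_iff₀ (by exact_mod_cast hT), mul_comm]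
    exact hsum T

theorem utility_near_optimal_general (V D ustar M : ℝ) (hV : 0 < V)
    (L u : ℕ → ℝ) (hL0 : L 0 = 0) (hLnn : ∀ n, 0 ≤ L n)
    (hbound : ∀ n, |u n| ≤ M)
    (hdrift : ∀ n : ℕ, (L (n+1) - L n) - V * u n ≤ D - V * ustar) :
    ustar - D / V ≤
      atTop.liminf (fun T : ℕ => (1 / (T : ℝ)) * ∑ n ∈ Finset.range T, u n) :=
  le_liminf_one_div_mul_sum_range (mul_sub_div_le_sum_of_drift_le hV hL0 hLnn hdrift)
    fun n => (le_abs_self _).trans (hbound n)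

/-- If the per-slot drift-minus-utility bound `Δ(X[n]) - V E[u[n]] ≤ D - V u*` holds in every
slot (with `L n = E[(1/2)X²[n]]`, `L 0 = 0`), then the long-term average utility is within
`D/V` of the optimum `u*`. -/
theorem utility_near_optimal (V D ustar M : ℝ) (hV : 0 < V) (hD : 0 < D)
    (L u : ℕ → ℝ) (hL0 : L 0 = 0) (hLnn : ∀ n, 0 ≤ L n)
    (hbound : ∀ n, |u n| ≤ M)
    (hdrift : ∀ n : ℕ, (L (n+1) - L n) - V * u n ≤ D - V * ustar) :
    ustar - D / V ≤
      atTop.liminf (fun T : ℕ => (1 / (T : ℝ)) * ∑ n ∈ Finset.range T, u n) :=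
  utility_near_optimal_general V D ustar M hV L u hL0 hLnn hbound hdrift
end
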